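/- arXiv:1604.06037 — 2 statements merged into one kernel-verified Lean document; each statement's English description precedes it below -/
import Mathlib

section
/- Every finite invariant commutative pseudo equality algebra is symmetric, i.e., satisfies x∽y = y∼x for all x, y. -/
/-- A pseudo equality algebra (JK-algebra). -/
structure PEA (A : Type*) where
  meet : A → A → A
  sim : A → A → A      -- x ∼ y
  bsim : A → A → A     -- x ∽ y
  one : A
  meet_comm : ∀ x y, meet x y = meet y x
  meet_assoc : ∀ x y z, meet (meet x y) z = meet x (meet y z)
  meet_idem : ∀ x, meet x x = x
  meet_one : ∀ x, meet x one = x                      -- 1 is top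
  sim_self : ∀ x, sim x x = one                       -- (A2)
  bsim_self : ∀ x, bsim x x = one
  sim_one : ∀ x, sim x one = x                        -- (A3)
  one_bsim : ∀ x, bsim one x = x
  A4a : ∀ x y z, meet x y = x → meet y z = y → meet (sim x z) (sim y z) = sim x z
  A4b : ∀ x y z, meet x y = x → meet y z = y → meet (sim x z) (sim x y) = sim x z
  A4c : ∀ x y z, meet x y = x → meet y z = y → meet (bsim z x) (bsim z y) = bsim z x
  A4d : ∀ x y z, meet x y = x → meet y z = y → meet (bsim z x) (bsim y x) = bsim z x
  A5a : ∀ x y z, meet (sim x y) (sim (meet x z) (meet y z)) = sim x y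
  A5b : ∀ x y z, meet (bsim x y) (bsim (meet x z) (meet y z)) = bsim x y
  A6a : ∀ x y z, meet (sim x y) (bsim (sim z x) (sim z y)) = sim x y
  A6b : ∀ x y z, meet (bsim x y) (sim (bsim x z) (bsim y z)) = bsim x y
  A7a : ∀ x y z, meet (sim x y) (sim (sim x z) (sim y z)) = sim x y
  A7b : ∀ x y z, meet (bsim x y) (bsim (bsim z x) (bsim z y)) = bsim x y

namespace PEA

variable {A : Type*}

/-- The induced order: x ≤ y iff x ∧ y = x. -/
def le (P : PEA A) (x y : A) : Prop := P.meet x y = x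

/-- x ∨₁ y = (x∧y ∼ x) ∽ y. -/
def v1 (P : PEA A) (x y : A) : A := P.bsim (P.sim (P.meet x y) x) y

/-- x ∨₂ y = y ∼ (x ∽ x∧y). -/
def v2 (P : PEA A) (x y : A) : A := P.sim y (P.bsim x (P.meet x y))

/-- x → y = x∧y ∼ x. -/
def arrow (P : PEA A) (x y : A) : A := P.sim (P.meet x y) x

/-- x ⇝ y = x ∽ x∧y. -/
def squig (P : PEA A) (x y : A) : A := P.bsim x (P.meet x y)

/-- Invariance: x∧y ∼ y = x ∼ y and x ∽ x∧y = x ∽ y. -/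
def Invariant (P : PEA A) : Prop :=
  ∀ x y, P.sim (P.meet x y) y = P.sim x y ∧ P.bsim x (P.meet x y) = P.bsim x y

/-- Commutativity: (x∧y∼x)∽y = (x∧y∼y)∽x and y∼(x∽x∧y) = x∼(y∽x∧y). -/
def Commutative (P : PEA A) : Prop :=
  ∀ x y, P.bsim (P.sim (P.meet x y) x) y = P.bsim (P.sim (P.meet x y) y) x ∧
    P.sim y (P.bsim x (P.meet x y)) = P.sim x (P.bsim y (P.meet x y))

/-- D is an upset. -/
def IsUpset (P : PEA A) (D : Set A) : Prop := ∀ x y, x ∈ D → P.le x y → y ∈ D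

/-- Deductive system. -/
def IsDS (P : PEA A) (D : Set A) : Prop :=
  P.one ∈ D ∧ P.IsUpset D ∧ ∀ x y, x ∈ D → P.sim y x ∈ D → y ∈ D

/-- Commutative deductive system. -/
def IsCommDS (P : PEA A) (D : Set A) : Prop :=
  P.IsDS D ∧
  (∀ x y, P.sim (P.meet x y) y ∈ D → P.sim x (P.bsim (P.sim (P.meet x y) x) y) ∈ D) ∧
  (∀ x y, P.bsim y (P.meet x y) ∈ D → P.bsim (P.sim y (P.bsim x (P.meet x y))) x ∈ D)

/-- Normal deductive system. -/
def IsNormalDS (P : PEA A) (D : Set A) : Prop :=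
  P.IsDS D ∧ ∀ x y, (P.sim x y ∈ D ∧ P.sim y x ∈ D) ↔ (P.bsim y x ∈ D ∧ P.bsim x y ∈ D)

/-- Measure: m(y∼x) = m(x∽y) = m(y) − m(x) whenever y ≤ x, with values in [0,∞). -/
def IsMeasure (P : PEA A) (m : A → ℝ) : Prop :=
  (∀ x, 0 ≤ m x) ∧
  ∀ x y, P.le y x → m (P.sim y x) = m y - m x ∧ m (P.bsim x y) = m y - m x

end PEA


namespace PEA

variable {A : Type*}

section Basics

variable (P : PEA A)

lemma leRefl (x : A) : P.le x x := P.meet_idem x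

lemma leTop (x : A) : P.le x P.one := P.meet_one x

lemma leTrans {x y z : A} (h1 : P.le x y) (h2 : P.le y z) : P.le x z := by
  have h1' : P.meet x y = x := h1
  have h2' : P.meet y z = y := h2
  show P.meet x z = x
  calc P.meet x z = P.meet (P.meet x y) z := by rw [h1']
    _ = P.meet x (P.meet y z) := P.meet_assoc x y z
    _ = P.meet x y := by rw [h2']
    _ = x := h1'

lemma leAntisymm {x y : A} (h1 : P.le x y) (h2 : P.le y x) : x = y := by
  have h1' : P.meet x y = x := h1
  have h2' : P.meet y x = y := h2
  calc x = P.meet x y := h1'.symm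
    _ = P.meet y x := P.meet_comm x y
    _ = y := h2'

lemma oneLe {x : A} (h : P.le P.one x) : x = P.one := leAntisymm P (leTop P x) h

lemma meetLeLeft (x y : A) : P.le (P.meet x y) x := by
  show P.meet (P.meet x y) x = P.meet x y
  rw [P.meet_comm x y, P.meet_assoc, P.meet_idem]

lemma meetLeRight (x y : A) : P.le (P.meet x y) y := by
  show P.meet (P.meet x y) y = P.meet x y
  rw [P.meet_assoc, P.meet_idem]

lemma leMeet {z x y : A} (hx : P.le z x) (hy : P.le z y) : P.le z (P.meet x y) := by
  have hx' : P.meet z x = z := hx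
  have hy' : P.meet z y = z := hy
  show P.meet z (P.meet x y) = z
  rw [← P.meet_assoc, hx', hy']

end Basics

section Inv

variable (P : PEA A)

lemma sim_one_left (hinv : P.Invariant) (x : A) : P.sim P.one x = P.one := by
  have h := (hinv P.one x).1
  rw [P.meet_comm, P.meet_one] at h
  rw [← h]
  exact P.sim_self x

lemma bsim_one_right (hinv : P.Invariant) (x : A) : P.bsim x P.one = P.one := by
  have h := (hinv x P.one).2
  rw [P.meet_one] at h
  rw [← h]
  exact P.bsim_self x

lemma le_sim (hinv : P.Invariant) (x z : A) : P.le x (P.sim x z) := by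
  have h := P.A7a x P.one z
  rw [sim_one_left P hinv z, P.sim_one, P.sim_one] at h
  exact h

lemma le_bsim (hinv : P.Invariant) (y z : A) : P.le y (P.bsim z y) := by
  have h := P.A7b P.one y z
  rw [bsim_one_right P hinv z, P.one_bsim, P.one_bsim] at h
  exact h

lemma le_sim_bsim (x z : A) : P.le x (P.sim z (P.bsim x z)) := by
  have h := P.A6b P.one x z
  rw [P.one_bsim, P.one_bsim] at h
  exact h

lemma le_bsim_sim (x z : A) : P.le x (P.bsim (P.sim z x) z) := by
  have h := P.A6a x P.one z
  rw [P.sim_one, P.sim_one] at h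
  exact h

lemma le_of_bsim_eq_one {x y : A} (h : P.bsim x y = P.one) : P.le x y := by
  have h1 := le_sim_bsim P x y
  rwa [h, P.sim_one] at h1

lemma sim_le_antitone (hinv : P.Invariant) (y : A) {x z : A} (h : P.le x z) :
    P.le (P.sim y z) (P.sim y x) := by
  have hzx : P.meet z x = x := by rw [P.meet_comm]; exact h
  have h5 := P.A5a (P.meet y z) z x
  have e1 : P.meet (P.meet y z) x = P.meet y x := by rw [P.meet_assoc, hzx]
  rw [e1, hzx, (hinv y z).1, (hinv y x).1] at h5
  exact h5

lemma bsim_le_antitone (hinv : P.Invariant) (y : A) {x z : A} (h : P.le x z) :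
    P.le (P.bsim z y) (P.bsim x y) := by
  have hzx : P.meet z x = x := by rw [P.meet_comm]; exact h
  have h5 := P.A5b z (P.meet z y) x
  have e1 : P.meet (P.meet z y) x = P.meet x y := by
    rw [P.meet_comm z y, P.meet_assoc, hzx, P.meet_comm y x]
  rw [e1, hzx, (hinv z y).2, (hinv x y).2] at h5
  exact h5

end Inv

section Join

variable (P : PEA A)

lemma v1_upper_left (hinv : P.Invariant) (x y : A) : P.le x (P.v1 x y) := by
  have h := le_bsim_sim P x y
  have e : P.sim y x = P.sim (P.meet x y) x := by
    rw [← (hinv y x).1, P.meet_comm y x]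
  rw [e] at h
  exact h

lemma v1_upper_right (hinv : P.Invariant) (x y : A) : P.le y (P.v1 x y) :=
  le_bsim P hinv y (P.sim (P.meet x y) x)

lemma v1_absorb {x y : A} (h : P.le x y) : P.v1 x y = y := by
  have h' : P.meet x y = x := h
  show P.bsim (P.sim (P.meet x y) x) y = y
  rw [h', P.sim_self, P.one_bsim]

lemma v1_comm (hc : P.Commutative) (x y : A) : P.v1 x y = P.v1 y x := by
  show P.bsim (P.sim (P.meet x y) x) y = P.bsim (P.sim (P.meet y x) y) x
  rw [P.meet_comm y x]
  exact (hc x y).1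

lemma v1_lub (hinv : P.Invariant) (hc : P.Commutative) {x y z : A}
    (hx : P.le x z) (hy : P.le y z) : P.le (P.v1 x y) z := by
  have e1 : P.v1 x y = P.bsim (P.sim y x) y := by
    show P.bsim (P.sim (P.meet x y) x) y = _
    rw [P.meet_comm x y, (hinv y x).1]
  have e2 : P.v1 z y = P.bsim (P.sim y z) y := by
    show P.bsim (P.sim (P.meet z y) z) y = _
    rw [P.meet_comm z y, (hinv y z).1]
  have s1 : P.le (P.sim y z) (P.sim y x) := sim_le_antitone P hinv y hx
  have s2 : P.le (P.bsim (P.sim y x) y) (P.bsim (P.sim y z) y) :=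
    bsim_le_antitone P hinv (y := y) s1
  have e4 : P.v1 z y = z := by rw [v1_comm P hc z y, v1_absorb P hy]
  rw [e1, ← e4, e2]
  exact s2

end Join

section Dual

variable (P : PEA A)

/-- The arrow-dual pseudo equality algebra. -/
def dual : PEA A where
  meet := P.meet
  sim := fun x y => P.bsim y x
  bsim := fun x y => P.sim y x
  one := P.one
  meet_comm := P.meet_comm
  meet_assoc := P.meet_assoc
  meet_idem := P.meet_idem
  meet_one := P.meet_one
  sim_self := P.bsim_self
  bsim_self := P.sim_self
  sim_one := P.one_bsim
  one_bsim := P.sim_one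
  A4a := fun x y z h1 h2 => P.A4c x y z h1 h2
  A4b := fun x y z h1 h2 => P.A4d x y z h1 h2
  A4c := fun x y z h1 h2 => P.A4a x y z h1 h2
  A4d := fun x y z h1 h2 => P.A4b x y z h1 h2
  A5a := fun x y z => P.A5b y x z
  A5b := fun x y z => P.A5a y x z
  A6a := fun x y z => P.A6b y x z
  A6b := fun x y z => P.A6a y x z
  A7a := fun x y z => P.A7b y x z
  A7b := fun x y z => P.A7a y x z

lemma dual_invariant (hinv : P.Invariant) : (dual P).Invariant := by
  intro x y
  constructor
  · show P.bsim y (P.meet x y) = P.bsim y x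
    rw [P.meet_comm]
    exact (hinv y x).2
  · show P.sim (P.meet x y) x = P.sim y x
    rw [P.meet_comm]
    exact (hinv y x).1

lemma dual_commutative (hc : P.Commutative) : (dual P).Commutative := by
  intro x y
  constructor
  · show P.sim y (P.bsim x (P.meet x y)) = P.sim x (P.bsim y (P.meet x y))
    exact (hc x y).2
  · show P.bsim (P.sim (P.meet x y) x) y = P.bsim (P.sim (P.meet x y) y) x
    exact (hc x y).1

lemma v2_upper_left (hinv : P.Invariant) (x y : A) : P.le x (P.v2 x y) :=
  v1_upper_left (dual P) (dual_invariant P hinv) x y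

lemma v2_upper_right (hinv : P.Invariant) (x y : A) : P.le y (P.v2 x y) :=
  v1_upper_right (dual P) (dual_invariant P hinv) x y

lemma v2_lub (hinv : P.Invariant) (hc : P.Commutative) {x y z : A}
    (hx : P.le x z) (hy : P.le y z) : P.le (P.v2 x y) z :=
  v1_lub (dual P) (dual_invariant P hinv) (dual_commutative P hc) hx hy

lemma v1_eq_v2 (hinv : P.Invariant) (hc : P.Commutative) (x y : A) :
    P.v1 x y = P.v2 x y :=
  leAntisymm P
    (v1_lub P hinv hc (v2_upper_left P hinv x y) (v2_upper_right P hinv x y))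
    (v2_lub P hinv hc (v1_upper_left P hinv x y) (v1_upper_right P hinv x y))

end Dual

section Basepoint

variable (P : PEA A)

lemma psi_phi (hinv : P.Invariant) (hc : P.Commutative) {c x : A} (h : P.le c x) :
    P.bsim (P.sim c x) c = x := by
  have hxc : P.meet x c = c := by rw [P.meet_comm]; exact h
  have e : P.v1 x c = P.bsim (P.sim c x) c := by
    show P.bsim (P.sim (P.meet x c) x) c = _
    rw [hxc]
  have h1 : P.le x (P.v1 x c) := v1_upper_left P hinv x c
  have h2 : P.le (P.v1 x c) x := v1_lub P hinv hc (leRefl P x) h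
  rw [e] at h1 h2
  exact leAntisymm P h2 h1

lemma phi_psi (hinv : P.Invariant) (hc : P.Commutative) {c x : A} (h : P.le c x) :
    P.sim c (P.bsim x c) = x :=
  psi_phi (dual P) (dual_invariant P hinv) (dual_commutative P hc) h

lemma phi_inj (hinv : P.Invariant) (hc : P.Commutative) {c x y : A}
    (hx : P.le c x) (hy : P.le c y) (h : P.sim c x = P.sim c y) : x = y := by
  have h1 := psi_phi P hinv hc hx
  rw [h, psi_phi P hinv hc hy] at h1
  exact h1.symm

/-- `b` covers `a`. -/
def covP (a b : A) : Prop :=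
  P.le a b ∧ a ≠ b ∧ ∀ t, P.le a t → P.le t b → t = a ∨ t = b

lemma phi_cov (hinv : P.Invariant) (hc : P.Commutative) {c x y : A}
    (hcx : P.le c x) (hxy : covP P x y) : covP P (P.sim c y) (P.sim c x) := by
  have hcy : P.le c y := leTrans P hcx hxy.1
  refine ⟨sim_le_antitone P hinv c hxy.1, ?_, ?_⟩
  · intro h
    exact hxy.2.1 (phi_inj P hinv hc hcx hcy h.symm)
  · intro t h1 h2
    have hct : P.le c t := leTrans P (le_sim P hinv c y) h1
    have hxs : P.le x (P.bsim t c) := by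
      have h3 := bsim_le_antitone P hinv (y := c) h2
      rwa [psi_phi P hinv hc hcx] at h3
    have hsy : P.le (P.bsim t c) y := by
      have h3 := bsim_le_antitone P hinv (y := c) h1
      rwa [psi_phi P hinv hc hcy] at h3
    rcases hxy.2.2 (P.bsim t c) hxs hsy with h | h
    · right
      rw [← phi_psi P hinv hc hct, h]
    · left
      rw [← phi_psi P hinv hc hct, h]

lemma psi_cov (hinv : P.Invariant) (hc : P.Commutative) {c x y : A}
    (hcx : P.le c x) (hxy : covP P x y) : covP P (P.bsim y c) (P.bsim x c) :=
  phi_cov (dual P) (dual_invariant P hinv) (dual_commutative P hc) hcx hxy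

lemma cov_one_squeeze {a b : A} (ha : covP P a P.one) (hb : covP P b P.one)
    (hab : P.le a b) : a = b := by
  rcases ha.2.2 b hab (leTop P b) with h | h
  · exact h.symm
  · exact (hb.2.1 h).elim

lemma cover_star (hinv : P.Invariant) (hc : P.Commutative) {c d e : A}
    (hcd : P.le c d) (hde : covP P d e) :
    P.sim d e = P.bsim (P.sim c d) (P.sim c e) := by
  have hle : P.le (P.sim d e) (P.bsim (P.sim c d) (P.sim c e)) := P.A6a d e c
  have c1 : covP P (P.sim d e) P.one := by
    have h := phi_cov P hinv hc (leRefl P d) hde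
    rwa [P.sim_self] at h
  have c2 : covP P (P.sim c e) (P.sim c d) := phi_cov P hinv hc hcd hde
  have c3 : covP P (P.bsim (P.sim c d) (P.sim c e)) P.one := by
    have h := psi_cov P hinv hc (leRefl P (P.sim c e)) c2
    rwa [P.bsim_self] at h
  exact cov_one_squeeze P c1 c3 hle

lemma cover_star' (hinv : P.Invariant) (hc : P.Commutative) {c d e : A}
    (hcd : P.le c d) (hde : covP P d e) :
    P.bsim e d = P.sim (P.bsim e c) (P.bsim d c) :=
  cover_star (dual P) (dual_invariant P hinv) (dual_commutative P hc) hcd hde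

end Basepoint

end PEA

theorem pea_key_lemma {A : Type*} [Finite A] (P : PEA A)
    (hinv : P.Invariant) (hc : P.Commutative) :
    ∀ c d : A, P.le c d → P.sim c d = P.bsim d c := by
  classical
  have wfgt : WellFounded (fun a b : A => P.le b a ∧ b ≠ a) := by
    haveI : IsTrans A (fun a b : A => P.le b a ∧ b ≠ a) :=
      ⟨fun a b c h1 h2 =>
        ⟨PEA.leTrans P h2.1 h1.1, fun h => h1.2 (PEA.leAntisymm P h1.1 (by rw [← h]; exact h2.1))⟩⟩
    haveI : IsIrrefl A (fun a b : A => P.le b a ∧ b ≠ a) := ⟨fun a h => h.2 rfl⟩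
    exact Finite.wellFounded_of_trans_of_irrefl _
  have wflt : WellFounded (fun a b : A => P.le a b ∧ a ≠ b) := by
    haveI : IsTrans A (fun a b : A => P.le a b ∧ a ≠ b) :=
      ⟨fun a b c h1 h2 =>
        ⟨PEA.leTrans P h1.1 h2.1, fun h => h1.2 (PEA.leAntisymm P h1.1 (by rw [h]; exact h2.1))⟩⟩
    haveI : IsIrrefl A (fun a b : A => P.le a b ∧ a ≠ b) := ⟨fun a h => h.2 rfl⟩
    exact Finite.wellFounded_of_trans_of_irrefl _
  intro c0
  refine wfgt.induction (C := fun c => ∀ d, P.le c d → P.sim c d = P.bsim d c) c0 ?_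
  intro c HG d0
  refine wfgt.induction (C := fun d => P.le c d → P.sim c d = P.bsim d c) d0 ?_
  intro d IH2 hcd
  by_cases hdc : c = d
  · rw [← hdc, P.sim_self, P.bsim_self]
  by_cases hd1 : d = P.one
  · rw [hd1, P.sim_one, P.one_bsim]
  by_cases hcov : ∃ e, PEA.covP P d e ∧ e ≠ P.one
  · -- Case A : there is a cover of d different from 1
    obtain ⟨e, hde, he1⟩ := hcov
    have hdeLe : P.le d e := hde.1
    have hce : P.le c e := PEA.leTrans P hcd hdeLe
    have hIH2e : P.sim c e = P.bsim e c := IH2 e ⟨hdeLe, hde.2.1⟩ hce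
    have hcε : P.le c (P.sim c e) := PEA.le_sim P hinv c e
    have hεne : c ≠ P.sim c e := by
      intro h
      apply he1
      have h2 : P.sim c e = P.sim c P.one := by rw [P.sim_one]; exact h.symm
      exact PEA.phi_inj P hinv hc hce (PEA.leTop P c) h2
    have hGd := HG d ⟨hcd, hdc⟩
    have hGε := HG (P.sim c e) ⟨hcε, hεne⟩
    have E1 : P.sim d e = P.bsim (P.sim c d) (P.sim c e) :=
      PEA.cover_star P hinv hc hcd hde
    have E2 : P.bsim e d = P.sim (P.bsim e c) (P.bsim d c) :=
      PEA.cover_star' P hinv hc hcd hde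
    have hGde : P.sim d e = P.bsim e d := hGd e hdeLe
    have hεd : P.le (P.sim c e) (P.sim c d) := PEA.sim_le_antitone P hinv c hdeLe
    have hεψ : P.le (P.sim c e) (P.bsim d c) := by
      have h := PEA.bsim_le_antitone P hinv (y := c) hdeLe
      rwa [← hIH2e] at h
    have E3 : P.sim (P.sim c e) (P.sim c d) = P.sim (P.sim c e) (P.bsim d c) := by
      calc P.sim (P.sim c e) (P.sim c d)
          = P.bsim (P.sim c d) (P.sim c e) := hGε (P.sim c d) hεd
        _ = P.sim d e := E1.symm
        _ = P.bsim e d := hGde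
        _ = P.sim (P.bsim e c) (P.bsim d c) := E2
        _ = P.sim (P.sim c e) (P.bsim d c) := by rw [hIH2e]
    exact PEA.phi_inj P hinv hc hεd hεψ E3
  · -- Case B : the only element above d is 1 (d is a coatom)
    push_neg at hcov
    have HB : ∀ s, P.le d s → d ≠ s → s = P.one := by
      intro s hds hnds
      obtain ⟨e, he, hmin⟩ := wflt.has_min {t | (P.le d t ∧ d ≠ t) ∧ P.le t s}
        ⟨s, ⟨⟨hds, hnds⟩, PEA.leRefl P s⟩⟩
      have hcove : PEA.covP P d e := by
        refine ⟨he.1.1, he.1.2, fun t h1 h2 => ?_⟩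
        by_cases h3 : t = d
        · exact Or.inl h3
        · refine Or.inr ?_
          by_contra h4
          exact hmin t ⟨⟨h1, fun hh => h3 hh.symm⟩, PEA.leTrans P h2 he.2⟩ ⟨h2, h4⟩
      have he1 := hcov e hcove
      have h1s : P.le P.one s := by rw [← he1]; exact he.2
      exact PEA.oneLe P h1s
    have hcovd1 : PEA.covP P d P.one := by
      refine ⟨PEA.leTop P d, hd1, fun t h1 h2 => ?_⟩
      by_cases h : t = d
      · exact Or.inl h
      · exact Or.inr (HB t h1 (fun hh => h hh.symm))
    have hcU : PEA.covP P c (P.sim c d) := by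
      have h := PEA.phi_cov P hinv hc hcd hcovd1
      rwa [P.sim_one] at h
    have hcV : PEA.covP P c (P.bsim d c) := by
      have h := PEA.psi_cov P hinv hc hcd hcovd1
      rwa [P.one_bsim] at h
    by_contra hUV
    have hnle : ∀ X Y : A, PEA.covP P c X → PEA.covP P c Y → X ≠ Y → ¬ P.le X Y := by
      intro X Y hX hY hne h
      rcases hY.2.2 X hX.1 h with h1 | h1
      · exact hX.2.1 h1.symm
      · exact hne h1
    have hψU : P.bsim (P.sim c d) c = d := PEA.psi_phi P hinv hc hcd
    -- V ≤ d
    have hVd : P.le (P.bsim d c) d := by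
      rcases hcV.2.2 (P.meet (P.bsim d c) d) (PEA.leMeet P hcV.1 hcd)
        (PEA.meetLeLeft P _ d) with h | h
      · exfalso
        have e1 : P.v1 d (P.bsim d c) = P.bsim (P.sim c d) (P.bsim d c) := by
          show P.bsim (P.sim (P.meet d (P.bsim d c)) d) (P.bsim d c) = _
          rw [P.meet_comm d (P.bsim d c), h]
        have hne2 : d ≠ P.v1 d (P.bsim d c) := by
          intro hEq
          have hVd' : P.le (P.bsim d c) d := by
            have h9 := PEA.v1_upper_right P hinv d (P.bsim d c)
            rwa [← hEq] at h9
          have h6 : P.meet (P.bsim d c) d = P.bsim d c := hVd'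
          rw [h6] at h
          exact hcV.2.1 h.symm
        have h1 : P.v1 d (P.bsim d c) = P.one :=
          HB _ (PEA.v1_upper_left P hinv d _) hne2
        have h2 : P.bsim (P.sim c d) (P.bsim d c) = P.one := by rw [← e1]; exact h1
        exact hnle _ _ hcU hcV hUV (PEA.le_of_bsim_eq_one P h2)
      · exact h
    have hcD0 : P.le c (P.sim c (P.sim c d)) := PEA.le_sim P hinv c _
    have hUVc : P.meet (P.sim c d) (P.bsim d c) = c := by
      rcases hcU.2.2 (P.meet (P.sim c d) (P.bsim d c)) (PEA.leMeet P hcU.1 hcV.1)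
        (PEA.meetLeLeft P _ _) with h | h
      · exact h
      · exact absurd h (hnle _ _ hcU hcV hUV)
    have e2 : P.v1 (P.sim c d) (P.bsim d c) =
        P.bsim (P.sim c (P.sim c d)) (P.bsim d c) := by
      show P.bsim (P.sim (P.meet (P.sim c d) (P.bsim d c)) (P.sim c d)) (P.bsim d c) = _
      rw [hUVc]
    have e3 : P.v2 (P.sim c d) (P.bsim d c) = P.sim (P.bsim d c) d := by
      show P.sim (P.bsim d c) (P.bsim (P.sim c d) (P.meet (P.sim c d) (P.bsim d c))) = _
      rw [hUVc, hψU]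
    rcases hcV.2.2 (P.meet (P.bsim d c) (P.sim c (P.sim c d)))
      (PEA.leMeet P hcV.1 hcD0) (PEA.meetLeLeft P _ _) with hm | hm
    · -- V ∧ D0 = c
      have e4 : P.bsim (P.sim c (P.sim c d)) (P.bsim d c) = P.sim c d := by
        have h5 := (hinv (P.sim c (P.sim c d)) (P.bsim d c)).2
        have h6 : P.meet (P.sim c (P.sim c d)) (P.bsim d c) = c := by
          rw [P.meet_comm]; exact hm
        rw [← h5, h6]
        exact PEA.psi_phi P hinv hc hcU.1
      have h7 : P.le (P.bsim d c) (P.sim c d) := by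
        have h8 := PEA.v1_upper_right P hinv (P.sim c d) (P.bsim d c)
        rw [e2, e4] at h8
        exact h8
      exact hnle _ _ hcV hcU (Ne.symm hUV) h7
    · -- V ≤ D0
      have hVD0 : P.le (P.bsim d c) (P.sim c (P.sim c d)) := hm
      have hGV := HG (P.bsim d c) ⟨hcV.1, hcV.2.1⟩
      have e6 : P.sim (P.bsim d c) (P.sim c (P.sim c d)) = P.sim (P.bsim d c) d := by
        calc P.sim (P.bsim d c) (P.sim c (P.sim c d))
            = P.bsim (P.sim c (P.sim c d)) (P.bsim d c) := hGV _ hVD0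
          _ = P.v1 (P.sim c d) (P.bsim d c) := e2.symm
          _ = P.v2 (P.sim c d) (P.bsim d c) := PEA.v1_eq_v2 P hinv hc _ _
          _ = P.sim (P.bsim d c) d := e3
      have hD0d : P.sim c (P.sim c d) = d := PEA.phi_inj P hinv hc hVD0 hVd e6
      apply hUV
      calc P.sim c d = P.bsim (P.sim c (P.sim c d)) c := (PEA.psi_phi P hinv hc hcU.1).symm
        _ = P.bsim d c := by rw [hD0d]

theorem stmt9 {A : Type*} [Finite A] (P : PEA A)
    (hinv : P.Invariant) (hc : P.Commutative) :
    ∀ x y, P.bsim x y = P.sim y x := by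
  intro x y
  have h1 : P.bsim x (P.meet x y) = P.bsim x y := (hinv x y).2
  have h2 : P.sim (P.meet x y) x = P.sim y x := by
    rw [P.meet_comm]; exact (hinv y x).1
  rw [← h1, ← h2]
  exact (pea_key_lemma P hinv hc (P.meet x y) x (PEA.meetLeLeft P x y)).symm
end

section
/- The kernel Ker(m) = {x ∈ A : m(x) = 0} of a measure m on a pseudo equality algebra A is a deductive system of A; if moreover A is invariant, then Ker(m) is a normal deductive system. -/
namespace PEA

variable {A : Type*}

lemma meet_le_left' (P : PEA A) (x y : A) : P.le (P.meet x y) x := by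
  unfold le
  rw [P.meet_comm x y, P.meet_assoc, P.meet_idem, P.meet_comm]

lemma meet_le_right' (P : PEA A) (x y : A) : P.le (P.meet x y) y := by
  unfold le
  rw [P.meet_assoc, P.meet_idem]

lemma m_anti (P : PEA A) (m : A → ℝ) (hm : P.IsMeasure m) {x y : A}
    (h : P.le x y) : m y ≤ m x := by
  have h1 := (hm.2 y x h).1
  have h2 := hm.1 (P.sim x y)
  linarith

lemma sim_le_arrow (P : PEA A) (x y : A) :
    P.le (P.sim y x) (P.sim (P.meet x y) x) := by
  have := P.A5a y x x
  rwa [P.meet_idem, P.meet_comm y x] at this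

end PEA

theorem stmt16 {A : Type*} (P : PEA A) (m : A → ℝ) (hm : P.IsMeasure m) :
    P.IsDS {x | m x = 0} ∧ (P.Invariant → P.IsNormalDS {x | m x = 0}) := by
  have hone : m P.one = 0 := by
    have hle : P.le P.one P.one := P.meet_idem P.one
    have := (hm.2 P.one P.one hle).1
    rw [P.sim_self] at this
    linarith
  have hDS : P.IsDS {x | m x = 0} := by
    refine ⟨hone, ?_, ?_⟩
    · intro x y hx hxy
      have h1 := P.m_anti m hm hxy
      have h2 := hm.1 y
      simp only [Set.mem_setOf_eq] at *
      linarith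
    · intro x y hx hs
      simp only [Set.mem_setOf_eq] at *
      have h1 := (hm.2 x (P.meet x y) (P.meet_le_left' x y)).1
      have h2 := P.m_anti m hm (P.sim_le_arrow x y)
      have h3 := P.m_anti m hm (P.meet_le_right' x y)
      have h4 := hm.1 y
      have h5 := hm.1 (P.sim (P.meet x y) x)
      linarith
  refine ⟨hDS, fun inv => ⟨hDS, fun x y => ?_⟩⟩
  have key : ∀ a b : A, m (P.sim a b) = m (P.bsim b a) := by
    intro a b
    have h1 : m (P.sim a b) = m (P.meet a b) - m b := by
      rw [← (inv a b).1]
      exact (hm.2 b (P.meet a b) (P.meet_le_right' a b)).1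
    have h2 : m (P.bsim b a) = m (P.meet a b) - m b := by
      rw [← (inv b a).2]
      have := (hm.2 b (P.meet b a) (P.meet_le_left' b a)).2
      rw [P.meet_comm b a]
      rwa [P.meet_comm b a] at this
    rw [h1, h2]
  simp only [Set.mem_setOf_eq]
  rw [key x y, key y x]
end
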